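/- arXiv:1011.5688 — 3 statements merged into one kernel-verified Lean document; each statement's English description precedes it below -/
import Mathlib

section
/- Let E be a nonzero object of 𝒜 admitting a Harder–Narasimhan filtration 0 ≠ E₀ ⊆ E₁ ⊆ ⋯ ⊆ Eₙ = E with respect to φ, and assume that every nonzero object of 𝒜 admits a Harder–Narasimhan filtration with respect to φ. Then for every nonzero subobject F of E with φ(F) ≥ φ(E₀), one has φ(F) = φ(E₀), F is φ-semistable, and the monomorphism F → E factors through the subobject E₀ (i.e. F is a subobject of E₀). -/
open CategoryTheory CategoryTheory.Limits

/-- `φ` satisfies the seesaw property: for every short exact sequence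
`0 → A → B → C → 0` with `A`, `B`, `C` all nonzero, either
`φ A < φ B < φ C`, or `φ A > φ B > φ C`, or `φ A = φ B = φ C`. -/
def SeesawProperty {C : Type*} [Category C] [Abelian C] {Φ : Type*} [LinearOrder Φ]
    (φ : C → Φ) : Prop :=
  ∀ S : ShortComplex C, S.ShortExact →
    ¬ IsZero S.X₁ → ¬ IsZero S.X₂ → ¬ IsZero S.X₃ →
      (φ S.X₁ < φ S.X₂ ∧ φ S.X₂ < φ S.X₃) ∨
      (φ S.X₃ < φ S.X₂ ∧ φ S.X₂ < φ S.X₁) ∨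
      (φ S.X₁ = φ S.X₂ ∧ φ S.X₂ = φ S.X₃)

/-- A nonzero object `E` is `φ`-semistable if `φ F ≤ φ E` for every nonzero
subobject `F` of `E`. -/
def IsSemistable {C : Type*} [Category C] [Abelian C] {Φ : Type*} [LinearOrder Φ]
    (φ : C → Φ) (E : C) : Prop :=
  ¬ IsZero E ∧ ∀ (F : C) (f : F ⟶ E), Mono f → ¬ IsZero F → φ F ≤ φ E

/-- The successive quotient `E_{i+1}/E_i` of a monotone chain of subobjects. -/
noncomputable def filtrationQuotient {C : Type*} [Category C] [Abelian C] {E : C} {n : ℕ}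
    (F : Fin (n + 1) → Subobject E) (hF : Monotone F) (i : Fin n) : C :=
  cokernel (Subobject.ofLE (F i.castSucc) (F i.succ) (hF (Fin.castSucc_lt_succ (i := i)).le))

/-- A Harder–Narasimhan filtration `0 ≠ E₀ ⊆ E₁ ⊆ ⋯ ⊆ Eₙ = E` of `E` with respect
to `φ`: `E₀` and each quotient `Eᵢ₊₁/Eᵢ` are nonzero and `φ`-semistable, and
`φ E₀ > φ (E₁/E₀) > ⋯ > φ (Eₙ/Eₙ₋₁)`. -/
structure HNFiltration {C : Type*} [Category C] [Abelian C] {Φ : Type*} [LinearOrder Φ]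
    (φ : C → Φ) (E : C) where
  n : ℕ
  F : Fin (n + 1) → Subobject E
  mono : Monotone F
  top : F (Fin.last n) = ⊤
  semistable_zero : IsSemistable φ ((F 0) : C)
  semistable_quot : ∀ i : Fin n, IsSemistable φ (filtrationQuotient F mono i)
  lt_zero : ∀ i : Fin n, φ (filtrationQuotient F mono i) < φ ((F 0) : C)
  strictAnti : StrictAnti fun i : Fin n => φ (filtrationQuotient F mono i)


/-!
Let `G := F₀'` be the first step of a Harder–Narasimhan filtration of `F`. By the seesaw property
the middle term of a short exact sequence lies between the outer two, so `φ F ≤ φ G`, strictly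
unless the filtration has length zero. A semistable object admits no nonzero map to a semistable
object of smaller `φ`; since every quotient `Eᵢ₊₁/Eᵢ` has `φ` below `φ E₀ ≤ φ G`, descending
induction along the filtration of `E` shows that `G → E` factors through `E₀`, whence
`φ G ≤ φ E₀ ≤ φ F ≤ φ G`. So all these values agree, the filtration of `F` has length zero, and
`F ≅ G` is semistable; applying the factorisation argument to `F` itself finishes the proof.
-/

section

variable {C : Type*} [Category C] [Abelian C] {Φ : Type*} [LinearOrder Φ] {φ : C → Φ}

namespace SeesawProperty

section ShortExact

variable {S : ShortComplex C}

lemma phi_X₁_eq_phi_X₂_of_phi_X₁_eq_phi_X₃ (hφ : SeesawProperty φ) (hS : S.ShortExact)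
    (h₁ : ¬ IsZero S.X₁) (h₂ : ¬ IsZero S.X₂) (h₃ : ¬ IsZero S.X₃) (h : φ S.X₁ = φ S.X₃) :
    φ S.X₁ = φ S.X₂ := by
  rcases hφ S hS h₁ h₂ h₃ with h' | h' | h' <;> order

lemma phi_X₁_eq_phi_X₂_of_phi_X₂_eq_phi_X₃ (hφ : SeesawProperty φ) (hS : S.ShortExact)
    (h₁ : ¬ IsZero S.X₁) (h₂ : ¬ IsZero S.X₂) (h₃ : ¬ IsZero S.X₃) (h : φ S.X₂ = φ S.X₃) :
    φ S.X₁ = φ S.X₂ := by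
  rcases hφ S hS h₁ h₂ h₃ with h' | h' | h' <;> order

lemma phi_X₂_le_phi_X₃ (hφ : SeesawProperty φ) (hS : S.ShortExact)
    (h₁ : ¬ IsZero S.X₁) (h₂ : ¬ IsZero S.X₂) (h₃ : ¬ IsZero S.X₃) (h : φ S.X₁ ≤ φ S.X₂) :
    φ S.X₂ ≤ φ S.X₃ := by
  rcases hφ S hS h₁ h₂ h₃ with h' | h' | h' <;> order

lemma phi_X₂_lt (hφ : SeesawProperty φ) (hS : S.ShortExact)
    (h₁ : ¬ IsZero S.X₁) (h₂ : ¬ IsZero S.X₂) (h₃ : ¬ IsZero S.X₃) {t : Φ}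
    (ht₁ : φ S.X₁ ≤ t) (ht₃ : φ S.X₃ < t) : φ S.X₂ < t := by
  rcases hφ S hS h₁ h₂ h₃ with h' | h' | h' <;> order

end ShortExact

/-- Compare `A ↪ A ⊞ A ↠ A` with `B ↪ A ⊞ A ↠ A`, where `B ↪ A ⊞ A` is `e⁻¹` followed by the first
inclusion: the first forces `φ (A ⊞ A) = φ A`, the second then `φ B = φ (A ⊞ A)`. -/
lemma phi_eq_of_iso (hφ : SeesawProperty φ) {A B : C} (e : A ≅ B) (hA : ¬ IsZero A) :
    φ A = φ B := by
  have hB : ¬ IsZero B := fun h => hA (h.of_iso e)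
  have hAA : ¬ IsZero (A ⊞ A) := fun h => hA (h.of_mono biprod.inl)
  have hsum : φ A = φ (A ⊞ A) :=
    hφ.phi_X₁_eq_phi_X₂_of_phi_X₁_eq_phi_X₃
      (ShortComplex.Splitting.ofHasBinaryBiproduct A A).shortExact hA hAA hA rfl
  let S := ShortComplex.mk (e.inv ≫ biprod.inl : B ⟶ A ⊞ A) biprod.snd (by simp)
  let σ : S.Splitting :=
    { r := biprod.fst ≫ e.hom
      s := biprod.inr
      f_r := by simp [S]
      s_g := by simp [S]
      id := by simp [S] }
  have := hφ.phi_X₁_eq_phi_X₂_of_phi_X₂_eq_phi_X₃ σ.shortExact hB hAA hA hsum.symm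
  exact hsum.trans this.symm

end SeesawProperty

namespace IsSemistable

lemma of_iso (hφ : SeesawProperty φ) {A B : C} (e : A ≅ B) (hA : IsSemistable φ A) :
    IsSemistable φ B :=
  ⟨fun h => hA.1 (h.of_iso e), fun F f _ hF =>
    (hA.2 F (f ≫ e.inv) inferInstance hF).trans_eq (hφ.phi_eq_of_iso e hA.1)⟩

lemma phi_le_of_epi (hφ : SeesawProperty φ) {X Q : C} (hX : IsSemistable φ X) (p : X ⟶ Q) [Epi p]
    (hQ : ¬ IsZero Q) : φ X ≤ φ Q := by
  by_cases hK : IsZero (kernel p)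
  · have : Mono p := Preadditive.mono_of_isZero_kernel p hK
    have : IsIso p := isIso_of_mono_of_epi p
    exact (hφ.phi_eq_of_iso (asIso p) hX.1).le
  · exact hφ.phi_X₂_le_phi_X₃ (S := ShortComplex.mk (kernel.ι p) p (kernel.condition p))
      ⟨ShortComplex.exact_kernel p⟩ hK hX.1 hQ (hX.2 _ (kernel.ι p) inferInstance hK)

/-- The image of `u` would be a quotient of `A` and a subobject of `B`. -/
lemma hom_eq_zero (hφ : SeesawProperty φ) {A B : C} (hA : IsSemistable φ A)
    (hB : IsSemistable φ B) (hlt : φ B < φ A) (u : A ⟶ B) : u = 0 := by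
  by_contra hu
  have hI : ¬ IsZero (Abelian.image u) := fun h => hu <| by
    rw [← Abelian.image.fac u, h.eq_zero_of_tgt (Abelian.factorThruImage u), zero_comp]
  have hAI := hA.phi_le_of_epi hφ (Abelian.factorThruImage u) hI
  have hIB := hB.2 _ (Abelian.image.ι u) inferInstance hI
  exact (hlt.trans_le (hAI.trans hIB)).false

end IsSemistable

lemma CategoryTheory.Subobject.factors_of_factorThru_comp_cokernel_π_eq_zero {A E : C}
    {P Q : Subobject E} (hPQ : P ≤ Q) {g : A ⟶ E} (hQ : Q.Factors g)
    (hg : Q.factorThru g hQ ≫ cokernel.π (Subobject.ofLE P Q hPQ) = 0) : P.Factors g := by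
  obtain ⟨l, hl⟩ := (ShortComplex.exact_cokernel (Subobject.ofLE P Q hPQ)).lift' _ hg
  rw [← Q.factorThru_arrow g hQ, ← hl, Category.assoc, Subobject.ofLE_arrow]
  exact Subobject.factors_comp_arrow l

namespace HNFiltration

variable {E : C} (fil : HNFiltration φ E)

lemma not_isZero (j : Fin (fil.n + 1)) : ¬ IsZero (fil.F j : C) := fun h =>
  fil.semistable_zero.1 (h.of_mono (Subobject.ofLE _ _ (fil.mono (Fin.zero_le j))))

lemma shortExact_quotient (i : Fin fil.n) :
    (ShortComplex.mk _ _ (cokernel.condition (Subobject.ofLE (fil.F i.castSucc) (fil.F i.succ)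
      (fil.mono (Fin.castSucc_lt_succ (i := i)).le)))).ShortExact :=
  ⟨ShortComplex.exact_cokernel _⟩

lemma phi_succ_lt_phi_zero_of_le (hφ : SeesawProperty φ) (i : Fin fil.n)
    (h : φ (fil.F i.castSucc : C) ≤ φ (fil.F 0 : C)) : φ (fil.F i.succ : C) < φ (fil.F 0 : C) :=
  hφ.phi_X₂_lt (fil.shortExact_quotient i) (fil.not_isZero _) (fil.not_isZero _)
    (fil.semistable_quot i).1 h (fil.lt_zero i)

lemma phi_le_phi_zero (hφ : SeesawProperty φ) (j : Fin (fil.n + 1)) :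
    φ (fil.F j : C) ≤ φ (fil.F 0 : C) := by
  induction j using Fin.induction with
  | zero => exact le_rfl
  | succ i ih => exact (fil.phi_succ_lt_phi_zero_of_le hφ i ih).le

lemma phi_last (hφ : SeesawProperty φ) : φ (fil.F (Fin.last fil.n) : C) = φ E := by
  have : IsIso (fil.F (Fin.last fil.n)).arrow := (Subobject.isIso_arrow_iff_eq_top _).2 fil.top
  exact hφ.phi_eq_of_iso (asIso (fil.F (Fin.last fil.n)).arrow) (fil.not_isZero _)

lemma phi_le (hφ : SeesawProperty φ) : φ E ≤ φ (fil.F 0 : C) :=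
  fil.phi_last hφ ▸ fil.phi_le_phi_zero hφ _

lemma phi_lt (hφ : SeesawProperty φ) (hn : fil.n ≠ 0) : φ E < φ (fil.F 0 : C) := by
  rw [← fil.phi_last hφ]
  let i : Fin fil.n := ⟨fil.n - 1, by omega⟩
  have hi : i.succ = Fin.last fil.n := Fin.ext (by simp only [Fin.val_succ, Fin.val_last, i]; omega)
  rw [← hi]
  exact fil.phi_succ_lt_phi_zero_of_le hφ i (fil.phi_le_phi_zero hφ _)

lemma isSemistable_of_phi_zero_le (hφ : SeesawProperty φ) (h : φ (fil.F 0 : C) ≤ φ E) :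
    IsSemistable φ E := by
  have hn : fil.n = 0 := by
    by_contra hn
    exact (fil.phi_lt hφ hn).not_ge h
  have htop : fil.F 0 = ⊤ := by
    rw [← fil.top]
    congr
    exact Fin.ext (by simp [hn])
  have : IsIso (fil.F 0).arrow := (Subobject.isIso_arrow_iff_eq_top _).2 htop
  exact fil.semistable_zero.of_iso hφ (asIso (fil.F 0).arrow)

/-- Each quotient `Eᵢ₊₁/Eᵢ` has `φ` below `φ A`, so it receives no nonzero map from `A`. -/
lemma factors_zero_of_isSemistable (hφ : SeesawProperty φ) {A : C} (hA : IsSemistable φ A)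
    (hle : φ (fil.F 0 : C) ≤ φ A) (g : A ⟶ E) : (fil.F 0).Factors g := by
  suffices ∀ j, (fil.F j).Factors g from this 0
  intro j
  induction j using Fin.reverseInduction with
  | last => rw [fil.top]; exact Subobject.top_factors g
  | cast i ih =>
    refine Subobject.factors_of_factorThru_comp_cokernel_π_eq_zero
      (fil.mono (Fin.castSucc_lt_succ (i := i)).le) ih ?_
    exact hA.hom_eq_zero hφ (fil.semistable_quot i) ((fil.lt_zero i).trans_le hle) _

end HNFiltration

end

theorem maximal_destabilising_subobject_general {C : Type*} [Category C] [Abelian C]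
    {Φ : Type*} [LinearOrder Φ] (φ : C → Φ) (hφ : SeesawProperty φ)
    (hHN : ∀ X : C, ¬ IsZero X → Nonempty (HNFiltration φ X))
    (E : C) (fil : HNFiltration φ E)
    (F : C) (f : F ⟶ E) (hf : Mono f) (hF : ¬ IsZero F)
    (hge : φ ((fil.F 0) : C) ≤ φ F) :
    φ F = φ ((fil.F 0) : C) ∧ IsSemistable φ F ∧ (fil.F 0).Factors f := by
  obtain ⟨filF⟩ := hHN F hF
  have hG := filF.semistable_zero
  have hFG : φ F ≤ φ (filF.F 0 : C) := filF.phi_le hφ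
  have hGE₀ : φ (filF.F 0 : C) ≤ φ (fil.F 0 : C) := by
    have hfac := fil.factors_zero_of_isSemistable hφ hG (hge.trans hFG) ((filF.F 0).arrow ≫ f)
    exact fil.semistable_zero.2 _ _ (mono_of_mono_fac ((fil.F 0).factorThru_arrow _ hfac)) hG.1
  have hFE₀ : φ F = φ (fil.F 0 : C) := le_antisymm (hFG.trans hGE₀) hge
  have hFss : IsSemistable φ F := filF.isSemistable_of_phi_zero_le hφ (hGE₀.trans hFE₀.ge)
  exact ⟨hFE₀, hFss, fil.factors_zero_of_isSemistable hφ hFss hge f⟩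

/-- If every nonzero object of `𝒜` admits a HN filtration with respect to `φ`, `E` is a
nonzero object with HN filtration `0 ≠ E₀ ⊆ ⋯ ⊆ Eₙ = E`, and `F` is a nonzero subobject
of `E` with `φ F ≥ φ E₀`, then `φ F = φ E₀`, `F` is `φ`-semistable, and the
monomorphism `F ⟶ E` factors through the subobject `E₀`. -/
theorem maximal_destabilising_subobject {C : Type*} [Category C] [Abelian C]
    {Φ : Type*} [LinearOrder Φ] (φ : C → Φ) (hφ : SeesawProperty φ)
    (hHN : ∀ X : C, ¬ IsZero X → Nonempty (HNFiltration φ X))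
    (E : C) (hE : ¬ IsZero E) (fil : HNFiltration φ E)
    (F : C) (f : F ⟶ E) (hf : Mono f) (hF : ¬ IsZero F)
    (hge : φ ((fil.F 0) : C) ≤ φ F) :
    φ F = φ ((fil.F 0) : C) ∧ IsSemistable φ F ∧ (fil.F 0).Factors f :=
  maximal_destabilising_subobject_general φ hφ hHN E fil F f hf hF hge
end

section
/- Let ν : E⁻³ → E⁻², ψ : E⁻² → E⁻¹, φ : E⁻¹ → E⁰ be B-linear maps between finite-rank free B-modules with φ∘ψ = 0 and ψ∘ν = 0. Denote reduction modulo π by a bar and reduction modulo π^{m−1} by a tilde. Assume ker(ψ̄) = im(ν̄) (i.e. the cohomology of the reduced complex at degree −2 vanishes). If the B-module ker(φ)/im(ψ) has a nonzero submodule of dimension d, where d < dim A, then the B-module ker(φ̃)/im(ψ̃) also has a nonzero submodule of dimension at most d. -/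
open scoped TensorProduct

/-- The ring `B := A ⊗_k R/(π^m)`. -/
noncomputable abbrev BRing (k A R : Type*) [Field k] [CommRing A] [Algebra k A]
    [CommRing R] [Algebra k R] (π : R) (m : ℕ) : Type _ :=
  A ⊗[k] (R ⧸ Ideal.span {π ^ m})

/-- The image of `π` in `B = A ⊗_k R/(π^m)`. -/
noncomputable def piB (k A R : Type*) [Field k] [CommRing A] [Algebra k A]
    [CommRing R] [Algebra k R] (π : R) (m : ℕ) : BRing k A R π m :=
  (1 : A) ⊗ₜ[k] (Ideal.Quotient.mk (Ideal.span {π ^ m}) π)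

/-- The dimension of a module `M` over a commutative ring `S`: the Krull dimension
of `S/ann_S(M)`. -/
noncomputable def moduleDim (S : Type*) [CommRing S] (M : Type*) [AddCommGroup M]
    [Module S M] : WithBot (WithTop ℕ) :=
  ringKrullDim (S ⧸ Module.annihilator S M)

lemma smul_top_le_comap_smul_top {S M N : Type*} [CommRing S] [AddCommGroup M] [Module S M]
    [AddCommGroup N] [Module S N] (I : Ideal S) (f : M →ₗ[S] N) :
    I • (⊤ : Submodule S M) ≤ Submodule.comap f (I • ⊤) := by
  rw [← Submodule.map_le_iff_le_comap, Submodule.map_smul'']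
  exact Submodule.smul_mono le_rfl le_top

/-- The reduction of a linear map `f : M → N` modulo an ideal `I`:
the induced map `M/IM → N/IN`. -/
noncomputable def reduceMap {S : Type*} [CommRing S] (I : Ideal S) {M N : Type*}
    [AddCommGroup M] [Module S M] [AddCommGroup N] [Module S N] (f : M →ₗ[S] N) :
    (M ⧸ (I • (⊤ : Submodule S M))) →ₗ[S] (N ⧸ (I • (⊤ : Submodule S N))) :=
  Submodule.mapQ _ _ f (smul_top_le_comap_smul_top I f)

/-- The homology `ker φ / im ψ` of a pair of composable linear maps (defined without
assuming `im ψ ⊆ ker φ`, by intersecting `im ψ` with `ker φ`). -/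
noncomputable abbrev homologyAt {S M N P : Type*} [CommRing S]
    [AddCommGroup M] [Module S M] [AddCommGroup N] [Module S N]
    [AddCommGroup P] [Module S P] (ψ : M →ₗ[S] N) (φ : N →ₗ[S] P) : Type _ :=
  LinearMap.ker φ ⧸ Submodule.comap (LinearMap.ker φ).subtype (LinearMap.range ψ)

/-! Since `π * π ^ (m - 1) = 0`, multiplication by `π` induces a map `μ : H̃ → H` from the
homology of the reduction mod `π ^ (m - 1)` to that of the complex itself. In `B` the annihilator
of `π` is exactly `π ^ (m - 1) B` (flat base change of the same fact in `R/(π^m)`), and this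
persists in flat `B`-modules. Hence if `π x ∈ im ψ` then `x ∈ im ψ + π ^ (m - 1) E⁻¹`, by
exactness of the reduced complex at `E⁻²`; this makes `μ` injective and puts every `π`-torsion
class of `H` in its image. A nonzero `N ≤ H` contains a nonzero `π`-torsion class, since `π` is
nilpotent, so `μ⁻¹ N` is nonzero; it embeds into `N`, so `ann N ≤ ann (μ⁻¹ N)` and
`dim μ⁻¹ N ≤ dim N`. -/

open Function

theorem mem_span_singleton_smul_top_iff {S M : Type*} [CommRing S] [AddCommGroup M] [Module S M]
    {c : S} {x : M} : x ∈ Ideal.span {c} • (⊤ : Submodule S M) ↔ ∃ y, c • y = x := by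
  simp [Submodule.ideal_span_singleton_smul, Submodule.mem_smul_pointwise_iff_exists]

theorem Function.Exact.mul_eq_zero {S : Type*} [CommRing S] {a b : S}
    (h : Exact (a * ·) (b * ·)) : b * a = 0 := by
  simpa using h.apply_apply_eq_zero 1

theorem Function.Exact.smul_of_flat {S : Type*} [CommRing S] {p q : S}
    (h : Exact (q * ·) (p * ·)) (M : Type*) [AddCommGroup M] [Module S M] [Module.Flat S M] :
    Exact (fun x : M => q • x) (fun x : M => p • x) := by
  change Exact (LinearMap.lsmul S M q) (LinearMap.lsmul S M p)
  refine .of_ladder_linearEquiv_of_exact (e₁ := TensorProduct.lid S M)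
    (e₂ := TensorProduct.lid S M) (e₃ := TensorProduct.lid S M) ?_ ?_
    (Module.Flat.rTensor_exact M (f := LinearMap.mulLeft S q) (g := LinearMap.mulLeft S p) h) <;>
  · ext x
    simp

theorem exact_mul_quotient_span_mul {R : Type*} [CommRing R] [IsDomain R] {a : R} (b : R)
    (ha : a ≠ 0) :
    Exact (fun x : R ⧸ Ideal.span {a * b} => Ideal.Quotient.mk _ b * x)
      (fun x => Ideal.Quotient.mk _ a * x) := by
  intro x
  obtain ⟨r, rfl⟩ := Ideal.Quotient.mk_surjective x
  simp only [← map_mul, Ideal.Quotient.eq_zero_iff_mem, Ideal.mem_span_singleton,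
    mul_dvd_mul_iff_left ha, Set.mem_range]
  constructor
  · rintro ⟨s, rfl⟩
    exact ⟨Ideal.Quotient.mk _ s, by rw [← map_mul]⟩
  · rintro ⟨y, hy⟩
    obtain ⟨s, rfl⟩ := Ideal.Quotient.mk_surjective y
    rw [← map_mul, Ideal.Quotient.eq, Ideal.mem_span_singleton'] at hy
    obtain ⟨t, ht⟩ := hy
    exact ⟨s - t * a, by linear_combination ht⟩

theorem Function.Exact.tensorProduct_mul {k Q : Type*} [CommRing k] [CommRing Q] [Algebra k Q]
    {a b : Q} (h : Exact (a * ·) (b * ·)) (A : Type*) [CommRing A] [Algebra k A]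
    [Module.Flat k A] :
    Exact (fun x : A ⊗[k] Q => ((1 : A) ⊗ₜ a) * x) (fun x => ((1 : A) ⊗ₜ b) * x) := by
  have hlT : ∀ c : Q, (LinearMap.mulLeft k c).lTensor A = LinearMap.mulLeft k ((1 : A) ⊗ₜ c) := by
    intro c
    ext x y
    simp
  have := Module.Flat.lTensor_exact A (f := LinearMap.mulLeft k a) (g := LinearMap.mulLeft k b) h
  rwa [hlT, hlT] at this

theorem exact_piB_pow_mul_piB_mul (k A : Type*) {R : Type*} [Field k] [CommRing A] [Algebra k A]
    [CommRing R] [IsDomain R] [Algebra k R] {π : R} (hπ : π ≠ 0) (t : ℕ) :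
    Exact (piB k A R π (t + 1) ^ t * ·) (piB k A R π (t + 1) * ·) := by
  have h := (exact_mul_quotient_span_mul (π ^ t) hπ).tensorProduct_mul (k := k) A
  rw [← pow_succ'] at h
  simpa only [piB, Algebra.TensorProduct.tmul_pow, one_pow, map_pow] using h

theorem exists_pow_smul_ne_zero_and_smul_eq_zero {S M : Type*} [CommRing S] [AddCommGroup M]
    [Module S M] (p : S) {x : M} (hx : x ≠ 0) {k : ℕ} (hk : p ^ k • x = 0) :
    ∃ j, p ^ j • x ≠ 0 ∧ p • p ^ j • x = 0 := by
  induction k with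
  | zero => exact absurd (by simpa using hk) hx
  | succ k ih =>
    by_cases hpk : p ^ k • x = 0
    · exact ih hpk
    · exact ⟨k, hpk, by rwa [smul_smul, ← pow_succ']⟩

theorem moduleDim_le_of_injective {S M N : Type*} [CommRing S] [AddCommGroup M] [Module S M]
    [AddCommGroup N] [Module S N] {f : M →ₗ[S] N} (hf : Injective f) :
    moduleDim S M ≤ moduleDim S N :=
  ringKrullDim_le_of_surjective _ <|
    Ideal.Quotient.factor_surjective (f.annihilator_le_of_injective hf)

section homologyMap

variable {S : Type*} [CommRing S] {M N P M' N' P' : Type*}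
  [AddCommGroup M] [Module S M] [AddCommGroup N] [Module S N] [AddCommGroup P] [Module S P]
  [AddCommGroup M'] [Module S M'] [AddCommGroup N'] [Module S N'] [AddCommGroup P'] [Module S P']
  {ψ : M →ₗ[S] N} {φ : N →ₗ[S] P} {ψ' : M' →ₗ[S] N'} {φ' : N' →ₗ[S] P'}
  {f₂ : M →ₗ[S] M'} {f₁ : N →ₗ[S] N'} {f₀ : P →ₗ[S] P'}

theorem map_mem_ker_of_comp_eq (h₁ : φ' ∘ₗ f₁ = f₀ ∘ₗ φ) {x : N} (hx : x ∈ LinearMap.ker φ) :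
    f₁ x ∈ LinearMap.ker φ' := by
  simp_all [← LinearMap.comp_apply]

noncomputable def homologyMap (h₂ : ψ' ∘ₗ f₂ = f₁ ∘ₗ ψ) (h₁ : φ' ∘ₗ f₁ = f₀ ∘ₗ φ) :
    homologyAt ψ φ →ₗ[S] homologyAt ψ' φ' :=
  Submodule.mapQ _ _ (f₁.restrict fun _ => map_mem_ker_of_comp_eq h₁) <| by
    rintro x ⟨y, hy⟩
    exact ⟨f₂ y, by simp [← LinearMap.comp_apply, h₂, hy]⟩

theorem homologyMap_mk (h₂ : ψ' ∘ₗ f₂ = f₁ ∘ₗ ψ) (h₁ : φ' ∘ₗ f₁ = f₀ ∘ₗ φ)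
    (x : LinearMap.ker φ) :
    homologyMap h₂ h₁ (Submodule.Quotient.mk x) =
      Submodule.Quotient.mk ⟨f₁ x, map_mem_ker_of_comp_eq h₁ x.2⟩ :=
  rfl

theorem homologyMap_injective (h₂ : ψ' ∘ₗ f₂ = f₁ ∘ₗ ψ) (h₁ : φ' ∘ₗ f₁ = f₀ ∘ₗ φ)
    (h : ∀ x ∈ LinearMap.ker φ, f₁ x ∈ LinearMap.range ψ' → x ∈ LinearMap.range ψ) :
    Injective (homologyMap h₂ h₁) := by
  rw [← LinearMap.ker_eq_bot, eq_bot_iff]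
  rintro c hc
  obtain ⟨x, rfl⟩ := Submodule.Quotient.mk_surjective _ c
  rw [LinearMap.mem_ker, homologyMap_mk, Submodule.Quotient.mk_eq_zero] at hc
  rw [Submodule.mem_bot, Submodule.Quotient.mk_eq_zero]
  exact h x x.2 hc

end homologyMap

section lsmulQuot

variable {S : Type*} [CommRing S] {p q : S} (hpq : p * q = 0)

noncomputable def lsmulQuot (M : Type*) [AddCommGroup M] [Module S M] :
    (M ⧸ (Ideal.span {q} • ⊤ : Submodule S M)) →ₗ[S] M :=
  Submodule.liftQ _ (LinearMap.lsmul S M p) <| by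
    rintro _ hx
    obtain ⟨y, rfl⟩ := mem_span_singleton_smul_top_iff.mp hx
    rw [LinearMap.mem_ker, LinearMap.lsmul_apply, smul_smul, hpq, zero_smul]

variable {M N : Type*} [AddCommGroup M] [Module S M] [AddCommGroup N] [Module S N]

theorem comp_lsmulQuot (f : M →ₗ[S] N) :
    f ∘ₗ lsmulQuot hpq M = lsmulQuot hpq N ∘ₗ reduceMap (Ideal.span {q}) f := by
  ext x
  simp [reduceMap, lsmulQuot]

end lsmulQuot

section reduction

variable {B : Type*} [CommRing B] {p q : B} {n : ℕ}
  {E3 E2 E1 E0 : Type*} [AddCommGroup E3] [Module B E3] [AddCommGroup E2] [Module B E2]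
  [AddCommGroup E1] [Module B E1] [AddCommGroup E0] [Module B E0]
  {ν : E3 →ₗ[B] E2} {ψ : E2 →ₗ[B] E1} {φ : E1 →ₗ[B] E0}

variable (ψ φ) in
noncomputable def homologyLsmulQuot (hpq : p * q = 0) :
    homologyAt (reduceMap (Ideal.span {q}) ψ) (reduceMap (Ideal.span {q}) φ) →ₗ[B]
      homologyAt ψ φ :=
  homologyMap (comp_lsmulQuot hpq ψ) (comp_lsmulQuot hpq φ)

theorem exists_eq_add_smul_of_smul_mem_range (hE1 : Exact (q • · : E1 → E1) (p • ·))
    (hψν : ψ ∘ₗ ν = 0)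
    (hexact : LinearMap.ker (reduceMap (Ideal.span {p}) ψ) =
      LinearMap.range (reduceMap (Ideal.span {p}) ν))
    {x : E1} (hx : p • x ∈ LinearMap.range ψ) : ∃ y u, ψ y + q • u = x := by
  obtain ⟨y, hy⟩ := hx
  have hy_ker : Submodule.Quotient.mk y ∈ LinearMap.ker (reduceMap (Ideal.span {p}) ψ) := by
    rw [LinearMap.mem_ker, reduceMap, Submodule.mapQ_apply, Submodule.Quotient.mk_eq_zero, hy]
    exact mem_span_singleton_smul_top_iff.mpr ⟨x, rfl⟩
  obtain ⟨z, hz⟩ := hexact ▸ hy_ker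
  obtain ⟨z, rfl⟩ := Submodule.Quotient.mk_surjective _ z
  rw [reduceMap, Submodule.mapQ_apply, Submodule.Quotient.eq] at hz
  obtain ⟨y', hy'⟩ := mem_span_singleton_smul_top_iff.mp hz
  have hpx : p • (x + ψ y') = 0 := by
    rw [smul_add, ← map_smul, hy', map_sub, ← LinearMap.comp_apply, hψν, hy]
    simp
  obtain ⟨u, hu⟩ := (hE1 _).mp hpx
  exact ⟨-y', u, by simp only at hu; rw [map_neg, hu]; abel⟩

theorem homologyLsmulQuot_injective (hpq : p * q = 0) (hE1 : Exact (q • · : E1 → E1) (p • ·))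
    (hψν : ψ ∘ₗ ν = 0)
    (hexact : LinearMap.ker (reduceMap (Ideal.span {p}) ψ) =
      LinearMap.range (reduceMap (Ideal.span {p}) ν)) :
    Injective (homologyLsmulQuot ψ φ hpq) := by
  refine homologyMap_injective _ _ fun x _ hx => ?_
  obtain ⟨x, rfl⟩ := Submodule.Quotient.mk_surjective _ x
  obtain ⟨y, u, rfl⟩ := exists_eq_add_smul_of_smul_mem_range hE1 hψν hexact hx
  refine ⟨Submodule.Quotient.mk y, ?_⟩
  rw [reduceMap, Submodule.mapQ_apply, Submodule.Quotient.eq]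
  exact mem_span_singleton_smul_top_iff.mpr ⟨-u, by simp⟩

theorem mem_range_homologyLsmulQuot_of_smul_eq_zero (hpq : p * p ^ (n + 1) = 0)
    (hE1 : Exact (p ^ (n + 1) • · : E1 → E1) (p • ·))
    (hE0 : Exact (p ^ (n + 1) • · : E0 → E0) (p • ·))
    (hφψ : φ ∘ₗ ψ = 0) (hψν : ψ ∘ₗ ν = 0)
    (hexact : LinearMap.ker (reduceMap (Ideal.span {p}) ψ) =
      LinearMap.range (reduceMap (Ideal.span {p}) ν))
    {c : homologyAt ψ φ} (hc : p • c = 0) :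
    c ∈ LinearMap.range (homologyLsmulQuot ψ φ hpq) := by
  obtain ⟨x, rfl⟩ := Submodule.Quotient.mk_surjective _ c
  rw [← Submodule.Quotient.mk_smul, Submodule.Quotient.mk_eq_zero] at hc
  obtain ⟨y, u, hyu⟩ := exists_eq_add_smul_of_smul_mem_range hE1 hψν hexact hc
  have hpu : p • p ^ n • u = x - ψ y := by
    rw [smul_smul, ← pow_succ', ← hyu, add_sub_cancel_left]
  have hφu : p • φ (p ^ n • u) = 0 := by
    rw [← map_smul, hpu, map_sub, x.2, ← LinearMap.comp_apply, hφψ]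
    simp
  obtain ⟨v, hv⟩ := (hE0 _).mp hφu
  have hu_ker : Submodule.Quotient.mk (p ^ n • u) ∈
      LinearMap.ker (reduceMap (Ideal.span {p ^ (n + 1)}) φ) := by
    rw [LinearMap.mem_ker, reduceMap, Submodule.mapQ_apply, Submodule.Quotient.mk_eq_zero]
    exact mem_span_singleton_smul_top_iff.mpr ⟨v, hv⟩
  refine ⟨Submodule.Quotient.mk ⟨_, hu_ker⟩, ?_⟩
  rw [homologyLsmulQuot, homologyMap_mk, Submodule.Quotient.eq]
  refine ⟨-y, ?_⟩
  change ψ (-y) = p • p ^ n • u - x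
  rw [hpu, map_neg, sub_sub_cancel_left]

end reduction

theorem exists_submodule_ne_bot_moduleDim_le_of_reduction {B : Type*} [CommRing B] {p : B} {n : ℕ}
    (hp : Exact (p ^ (n + 1) * ·) (p * ·))
    {E3 E2 E1 E0 : Type*} [AddCommGroup E3] [Module B E3] [AddCommGroup E2] [Module B E2]
    [AddCommGroup E1] [Module B E1] [AddCommGroup E0] [Module B E0]
    [Module.Flat B E1] [Module.Flat B E0]
    {ν : E3 →ₗ[B] E2} {ψ : E2 →ₗ[B] E1} {φ : E1 →ₗ[B] E0}
    (hφψ : φ ∘ₗ ψ = 0) (hψν : ψ ∘ₗ ν = 0)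
    (hexact : LinearMap.ker (reduceMap (Ideal.span {p}) ψ) =
      LinearMap.range (reduceMap (Ideal.span {p}) ν))
    {N : Submodule B (homologyAt ψ φ)} (hN : N ≠ ⊥) :
    ∃ N' : Submodule B (homologyAt (reduceMap (Ideal.span {p ^ (n + 1)}) ψ)
        (reduceMap (Ideal.span {p ^ (n + 1)}) φ)),
      N' ≠ ⊥ ∧ moduleDim B N' ≤ moduleDim B N := by
  have hpq := hp.mul_eq_zero
  have hE1 := hp.smul_of_flat E1
  have hE0 := hp.smul_of_flat E0
  set μ := homologyLsmulQuot ψ φ hpq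
  have hμ : Injective μ := homologyLsmulQuot_injective hpq hE1 hψν hexact
  obtain ⟨c, hcN, hc0⟩ := Submodule.exists_mem_ne_zero_of_ne_bot hN
  obtain ⟨j, hj0, hj⟩ := exists_pow_smul_ne_zero_and_smul_eq_zero p hc0 (k := n + 2)
    (by rw [pow_succ', hpq, zero_smul])
  obtain ⟨g, hg⟩ := mem_range_homologyLsmulQuot_of_smul_eq_zero hpq hE1 hE0 hφψ hψν hexact hj
  refine ⟨N.comap μ, ?_, moduleDim_le_of_injective (f := μ.submoduleComap N)
    fun a b h => Subtype.ext (hμ (congrArg Subtype.val h))⟩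
  rw [Submodule.ne_bot_iff]
  refine ⟨g, ?_, fun hg0 => hj0 ?_⟩
  · rw [Submodule.mem_comap, hg]
    exact N.smul_mem _ hcN
  · rw [← hg, hg0, map_zero]

theorem homology_reduction_submodule_general
    (k : Type*) [Field k]
    (R : Type*) [CommRing R] [IsDomain R] [Algebra k R]
    (π : R) (hπ : Irreducible π)
    (A : Type*) [CommRing A] [Algebra k A]
    (m : ℕ) (hm : 1 < m)
    (E3 E2 E1 E0 : Type*)
    [AddCommGroup E3] [Module (BRing k A R π m) E3]
    [AddCommGroup E2] [Module (BRing k A R π m) E2]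
    [AddCommGroup E1] [Module (BRing k A R π m) E1]
    [AddCommGroup E0] [Module (BRing k A R π m) E0]
    [Module.Free (BRing k A R π m) E1]
    [Module.Free (BRing k A R π m) E0]
    (ν : E3 →ₗ[BRing k A R π m] E2) (ψ : E2 →ₗ[BRing k A R π m] E1)
    (φ : E1 →ₗ[BRing k A R π m] E0)
    (hφψ : φ.comp ψ = 0) (hψν : ψ.comp ν = 0)
    (hexact : LinearMap.ker (reduceMap (Ideal.span {piB k A R π m}) ψ) =
      LinearMap.range (reduceMap (Ideal.span {piB k A R π m}) ν))
    (d : WithBot (WithTop ℕ))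
    (hsub : ∃ N : Submodule (BRing k A R π m) (homologyAt ψ φ),
      N ≠ ⊥ ∧ moduleDim (BRing k A R π m) N = d) :
    ∃ N' : Submodule (BRing k A R π m)
        (homologyAt (reduceMap (Ideal.span {piB k A R π m ^ (m - 1)}) ψ)
          (reduceMap (Ideal.span {piB k A R π m ^ (m - 1)}) φ)),
      N' ≠ ⊥ ∧ moduleDim (BRing k A R π m) N' ≤ d := by
  obtain ⟨N, hN, rfl⟩ := hsub
  obtain ⟨n, rfl⟩ : ∃ n, m = n + 2 := ⟨m - 2, by omega⟩
  exact exists_submodule_ne_bot_moduleDim_le_of_reduction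
    (exact_piB_pow_mul_piB_mul k A hπ.ne_zero (n + 1)) hφψ hψν hexact hN

/-- Let `ν : E⁻³ → E⁻²`, `ψ : E⁻² → E⁻¹`, `φ : E⁻¹ → E⁰` be `B`-linear maps between
finite-rank free `B`-modules with `φ ∘ ψ = 0`, `ψ ∘ ν = 0`, and assume the reduced
complex mod `π` is exact at degree `-2` (`ker ψ̄ = im ν̄`).  If `ker φ / im ψ` has a
nonzero submodule of dimension `d < dim A`, then the homology `ker φ̃ / im ψ̃` of the
reduction mod `π^{m-1}` has a nonzero submodule of dimension `≤ d`. -/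
theorem homology_reduction_submodule
    (k : Type*) [Field k] [IsAlgClosed k] [CharZero k]
    (R : Type*) [CommRing R] [IsDomain R] [IsDiscreteValuationRing R] [Algebra k R]
    (π : R) (hπ : Irreducible π)
    (hres : Function.Bijective ((IsLocalRing.residue R).comp (algebraMap k R)))
    (A : Type*) [CommRing A] [IsDomain A] [Algebra k A] [Algebra.FiniteType k A]
    (m : ℕ) (hm : 1 < m)
    (E3 E2 E1 E0 : Type*)
    [AddCommGroup E3] [Module (BRing k A R π m) E3]
    [AddCommGroup E2] [Module (BRing k A R π m) E2]
    [AddCommGroup E1] [Module (BRing k A R π m) E1]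
    [AddCommGroup E0] [Module (BRing k A R π m) E0]
    [Module.Free (BRing k A R π m) E3] [Module.Finite (BRing k A R π m) E3]
    [Module.Free (BRing k A R π m) E2] [Module.Finite (BRing k A R π m) E2]
    [Module.Free (BRing k A R π m) E1] [Module.Finite (BRing k A R π m) E1]
    [Module.Free (BRing k A R π m) E0] [Module.Finite (BRing k A R π m) E0]
    (ν : E3 →ₗ[BRing k A R π m] E2) (ψ : E2 →ₗ[BRing k A R π m] E1)
    (φ : E1 →ₗ[BRing k A R π m] E0)
    (hφψ : φ.comp ψ = 0) (hψν : ψ.comp ν = 0)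
    (hexact : LinearMap.ker (reduceMap (Ideal.span {piB k A R π m}) ψ) =
      LinearMap.range (reduceMap (Ideal.span {piB k A R π m}) ν))
    (d : WithBot (WithTop ℕ)) (hd : d < ringKrullDim A)
    (hsub : ∃ N : Submodule (BRing k A R π m) (homologyAt ψ φ),
      N ≠ ⊥ ∧ moduleDim (BRing k A R π m) N = d) :
    ∃ N' : Submodule (BRing k A R π m)
        (homologyAt (reduceMap (Ideal.span {piB k A R π m ^ (m - 1)}) ψ)
          (reduceMap (Ideal.span {piB k A R π m ^ (m - 1)}) φ)),
      N' ≠ ⊥ ∧ moduleDim (BRing k A R π m) N' ≤ d :=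
  homology_reduction_submodule_general k R π hπ A m hm E3 E2 E1 E0 ν ψ φ hφψ hψν hexact d hsub
end

section
/- Let S be a Noetherian R-algebra, let F and G be finitely generated S-modules that are torsion-free as R-modules, and let φ : F → G be an S-linear map such that φ ⊗_R K : F ⊗_R K → G ⊗_R K is surjective. Then there exists an integer m ≥ 0 such that π^m G ⊆ φ(F); moreover, setting I := φ⁻¹(π^m G), one has π^m F ⊆ I ⊆ F, multiplication by π^m is an injective map from G onto π^m G, and the composite of φ|_I : I → π^m G with the inverse of this multiplication map is a surjective S-linear map I → G. -/
open scoped TensorProduct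

/-!
Since `φ ⊗ K` is onto and `K` is the localization of `R` at its nonzero elements, every `y : G`
satisfies `s • y ∈ φ(F)` for some `s ≠ 0`, and `s` is a unit times a power of `π`. The
submodules `{y | π^k • y ∈ φ(F)}` increase with `k` and exhaust `G`; as `G` is finitely generated
(a compact element of its lattice of submodules), one of them is already all of `G`. Everything
else follows because `π^m` acts injectively on the `R`-torsion-free module `G`.
-/

theorem Submodule.exists_uniform_pow_smul_mem {S G : Type*} [CommSemiring S]
    [AddCommMonoid G] [Module S G] [Module.Finite S G] (N : Submodule S G) (a : S)
    (h : ∀ y : G, ∃ k : ℕ, a ^ k • y ∈ N) : ∃ m : ℕ, ∀ y : G, a ^ m • y ∈ N := by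
  let D : ℕ → Submodule S G := fun m => N.comap (a ^ m • LinearMap.id)
  have hD : Monotone D := by
    refine monotone_nat_of_le_succ fun m y hy => ?_
    simpa [D, pow_succ', mul_smul] using N.smul_mem a hy
  have hcover : (⊤ : Submodule S G) ≤ sSup (Set.range D) := by
    rw [sSup_range]
    intro y _
    obtain ⟨k, hk⟩ := h y
    exact (Submodule.mem_iSup_of_directed D hD.directed_le).mpr ⟨k, by simpa [D] using hk⟩
  have htop : IsCompactElement (⊤ : Submodule S G) := by
    rw [← Submodule.fg_iff_compact, ← Module.finite_def]; infer_instance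
  obtain ⟨-, ⟨m, rfl⟩, hm⟩ :=
    (CompleteLattice.isCompactElement_iff_le_of_directed_sSup_le _ _).mp htop _
      (Set.range_nonempty D) (directedOn_range.mpr hD.directed_le) hcover
  exact ⟨m, fun y => by simpa [D] using hm Submodule.mem_top⟩

theorem LinearMap.exists_smul_mem_range_of_surjective_baseChange {R K F G : Type*} [CommRing R]
    (M : Submonoid R) [CommRing K] [Algebra R K] [IsLocalization M K]
    [AddCommGroup F] [Module R F] [AddCommGroup G] [Module R G] (f : F →ₗ[R] G)
    (hf : Function.Surjective (f.baseChange K)) (y : G) :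
    ∃ s ∈ M, s • y ∈ LinearMap.range f := by
  have : IsLocalizedModule M (TensorProduct.mk R K F 1) :=
    (isLocalizedModule_iff_isBaseChange M K _).mpr (TensorProduct.isBaseChange R F K)
  have : IsLocalizedModule M (TensorProduct.mk R K G 1) :=
    (isLocalizedModule_iff_isBaseChange M K _).mpr (TensorProduct.isBaseChange R G K)
  obtain ⟨z, hz⟩ := hf (1 ⊗ₜ y)
  obtain ⟨⟨x, s⟩, hxs⟩ := IsLocalizedModule.surj M (TensorProduct.mk R K F 1) z
  have hsy : TensorProduct.mk R K G 1 ((s : R) • y) = TensorProduct.mk R K G 1 (f x) := by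
    simpa [Submonoid.smul_def, hz, LinearMap.map_smul_of_tower, TensorProduct.tmul_smul] using
      congrArg (f.baseChange K) hxs
  obtain ⟨t, ht⟩ := IsLocalizedModule.exists_of_eq (S := M) hsy
  refine ⟨t * s, M.mul_mem t.2 s.2, t • x, ?_⟩
  simpa [Submonoid.smul_def, mul_smul] using ht.symm

theorem IsDiscreteValuationRing.exists_pow_smul_mem_of_smul_mem {R G : Type*} [CommRing R]
    [IsDomain R] [IsDiscreteValuationRing R] {π : R} (hπ : Irreducible π) [AddCommGroup G]
    [Module R G] (N : Submodule R G) {s : R} (hs : s ≠ 0) {y : G} (hy : s • y ∈ N) :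
    ∃ k : ℕ, π ^ k • y ∈ N := by
  obtain ⟨k, u, rfl⟩ := IsDiscreteValuationRing.eq_unit_mul_pow_irreducible hs hπ
  refine ⟨k, ?_⟩
  simpa [mul_smul] using N.smul_mem (↑u⁻¹ : R) hy

theorem constructionA_general
    (R : Type*) [CommRing R] [IsDomain R] [IsDiscreteValuationRing R]
    (π : R) (hπ : Irreducible π)
    (K : Type*) [Field K] [Algebra R K] [IsFractionRing R K]
    (S : Type*) [CommRing S] [Algebra R S]
    (F G : Type*)
    [AddCommGroup F] [Module R F] [Module S F] [IsScalarTower R S F]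
    [AddCommGroup G] [Module R G] [Module S G] [IsScalarTower R S G]
    [Module.Finite S G]
    [NoZeroSMulDivisors R G]
    (φ : F →ₗ[S] G)
    (hsurj : Function.Surjective (LinearMap.baseChange K (LinearMap.restrictScalars R φ))) :
    ∃ m : ℕ,
      LinearMap.range (algebraMap R S (π ^ m) • (LinearMap.id : G →ₗ[S] G)) ≤
          LinearMap.range φ ∧
      (∀ x : F, algebraMap R S (π ^ m) • x ∈
        Submodule.comap φ
          (LinearMap.range (algebraMap R S (π ^ m) • (LinearMap.id : G →ₗ[S] G)))) ∧
      Function.Injective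
        (algebraMap R S (π ^ m) • (LinearMap.id : G →ₗ[S] G)) ∧
      (∀ y : G, ∃ x ∈ Submodule.comap φ
          (LinearMap.range (algebraMap R S (π ^ m) • (LinearMap.id : G →ₗ[S] G))),
        φ x = algebraMap R S (π ^ m) • y) := by
  have hpow : ∀ y : G, ∃ k : ℕ, algebraMap R S π ^ k • y ∈ LinearMap.range φ := fun y => by
    obtain ⟨s, hs, hsy⟩ :=
      LinearMap.exists_smul_mem_range_of_surjective_baseChange (nonZeroDivisors R) _ hsurj y
    obtain ⟨k, hk⟩ := IsDiscreteValuationRing.exists_pow_smul_mem_of_smul_mem hπ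
      (LinearMap.range (φ.restrictScalars R)) (nonZeroDivisors.ne_zero hs) hsy
    exact ⟨k, by simpa [← map_pow, algebraMap_smul] using hk⟩
  obtain ⟨m, hm⟩ := (LinearMap.range φ).exists_uniform_pow_smul_mem _ hpow
  simp only [← map_pow] at hm
  refine ⟨m, ?_, fun x => ⟨φ x, by simp⟩, fun y₁ y₂ h => ?_, fun y => ?_⟩
  · rintro _ ⟨y, rfl⟩
    exact hm y
  · simp only [LinearMap.smul_apply, LinearMap.id_apply, algebraMap_smul] at h
    exact smul_right_injective G (pow_ne_zero m hπ.ne_zero) h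
  · obtain ⟨x, hx⟩ := hm y
    exact ⟨x, ⟨y, hx.symm⟩, hx⟩

/-- Let `R` be a DVR with uniformiser `π` and fraction field `K`, `S` a Noetherian
`R`-algebra, `F`, `G` finitely generated `S`-modules which are torsion-free over `R`,
and `φ : F → G` an `S`-linear map with `φ ⊗_R K` surjective.  Then there is an `m ≥ 0`
such that `π^m G ⊆ φ(F)`; moreover, with `I := φ⁻¹(π^m G)`, one has `π^m F ⊆ I ⊆ F`,
multiplication by `π^m` is injective on `G`, and composing `φ|_I : I → π^m G` with the
inverse of this multiplication map gives a surjection `I → G` (that is, every `y : G`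
is of the form `y = (π^m)⁻¹ φ(x)` for some `x ∈ I`, i.e. `φ x = π^m • y`). -/
theorem constructionA
    (R : Type*) [CommRing R] [IsDomain R] [IsDiscreteValuationRing R]
    (π : R) (hπ : Irreducible π)
    (K : Type*) [Field K] [Algebra R K] [IsFractionRing R K]
    (S : Type*) [CommRing S] [Algebra R S] [IsNoetherianRing S]
    (F G : Type*)
    [AddCommGroup F] [Module R F] [Module S F] [IsScalarTower R S F]
    [AddCommGroup G] [Module R G] [Module S G] [IsScalarTower R S G]
    [Module.Finite S F] [Module.Finite S G]
    [NoZeroSMulDivisors R F] [NoZeroSMulDivisors R G]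
    (φ : F →ₗ[S] G)
    (hsurj : Function.Surjective (LinearMap.baseChange K (LinearMap.restrictScalars R φ))) :
    ∃ m : ℕ,
      LinearMap.range (algebraMap R S (π ^ m) • (LinearMap.id : G →ₗ[S] G)) ≤
          LinearMap.range φ ∧
      (∀ x : F, algebraMap R S (π ^ m) • x ∈
        Submodule.comap φ
          (LinearMap.range (algebraMap R S (π ^ m) • (LinearMap.id : G →ₗ[S] G)))) ∧
      Function.Injective
        (algebraMap R S (π ^ m) • (LinearMap.id : G →ₗ[S] G)) ∧
      (∀ y : G, ∃ x ∈ Submodule.comap φ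
          (LinearMap.range (algebraMap R S (π ^ m) • (LinearMap.id : G →ₗ[S] G))),
        φ x = algebraMap R S (π ^ m) • y) :=
  constructionA_general R π hπ K S F G φ hsurj
end
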